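/- arXiv:1112.0967 — 4 statements merged into one kernel-verified Lean document; each statement's English description precedes it below -/
import Mathlib

section
/- Let q \in (0,1) and p \in \mathbb{N}, p \ge 1. Then \int_0^{\pi} \sqrt{1 - 2q^p\cos(pt) + q^{2p}}/(1 - 2q\cos t + q^2)\, dt = 2\,(1-q^{2p})/(1-q^2) \cdot \mathbf{K}(q^p), where \mathbf{K}(\rho) = \int_0^{\pi/2} dt/\sqrt{1-\rho^2 \sin^2 t} is the complete elliptic integral of the first kind. -/
/-
Write `P_r(θ) = (1 - r²) / (1 - 2r cos θ + r²)` for the Poisson kernel of the unit disc and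
`ρ = q^p`. Summing the Herglotz kernel `(1 + z) / (1 - z)` over `z = w ζ^k`, with `w = q e^{it}`
and `ζ` a primitive `p`-th root of unity, gives `p (1 + w^p) / (1 - w^p)`; taking real parts,
the average of `P_q` over the rotations by `2π/p` is `P_ρ(pt)`. Against functions of `pt` this
turns `P_q(t) dt` into `P_ρ(u) du` on a full period, so after unfolding `[0, π]` to `[0, 2π]`
the integral is `(1 - ρ²) / (2 (1 - q²))` times `∫₀^{2π} du / √(1 - 2ρ cos u + ρ²)`. The
substitution `u = φ - arcsin(ρ sin φ)`, for which
`√(1 - 2ρ cos u + ρ²) = √(1 - ρ² sin² φ) - ρ cos φ`, identifies this with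
`∫₀^{2π} dφ / √(1 - ρ² sin² φ) = 4 K(ρ)`.
-/

open Real intervalIntegral

namespace IsPrimitiveRoot

open Finset

variable {K : Type*} [Field K] {ζ : K} {p : ℕ} {w : K}

theorem mul_pow_pow_eq (hζ : IsPrimitiveRoot ζ p) (w : K) (k : ℕ) :
    (w * ζ ^ k) ^ p = w ^ p := by
  rw [mul_pow, ← pow_mul, mul_comm k, pow_mul, hζ.pow_eq_one, one_pow, mul_one]

theorem one_sub_mul_pow_ne_zero (hζ : IsPrimitiveRoot ζ p) (hw : w ^ p ≠ 1) (k : ℕ) :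
    1 - w * ζ ^ k ≠ 0 := by
  refine left_ne_zero_of_mul (b := ∑ j ∈ range p, (w * ζ ^ k) ^ j) ?_
  rw [mul_neg_geom_sum, hζ.mul_pow_pow_eq]
  exact sub_ne_zero.2 hw.symm

theorem sum_pow_pow_eq_ite (hζ : IsPrimitiveRoot ζ p) {j : ℕ} (hj : j < p) :
    ∑ k ∈ range p, (ζ ^ j) ^ k = if j = 0 then (p : K) else 0 := by
  split_ifs with hj0
  · simp [hj0]
  · have hne : 1 - ζ ^ j ≠ 0 := sub_ne_zero.2 (hζ.pow_ne_one_of_pos_of_lt hj0 hj).symm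
    refine (mul_eq_zero.1 ?_).resolve_left hne
    rw [mul_neg_geom_sum, ← pow_mul, mul_comm, pow_mul, hζ.pow_eq_one, one_pow, sub_self]

theorem sum_inv_one_sub_mul_pow (hζ : IsPrimitiveRoot ζ p) (hw : w ^ p ≠ 1) :
    ∑ k ∈ range p, (1 - w * ζ ^ k)⁻¹ = p / (1 - w ^ p) := by
  have hwp : 1 - w ^ p ≠ 0 := sub_ne_zero.2 hw.symm
  have hgeom (k : ℕ) :
      (1 - w * ζ ^ k)⁻¹ = (∑ j ∈ range p, w ^ j * (ζ ^ j) ^ k) / (1 - w ^ p) := by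
    rw [eq_div_iff hwp, ← hζ.mul_pow_pow_eq w k, ← mul_neg_geom_sum,
      inv_mul_cancel_left₀ (hζ.one_sub_mul_pow_ne_zero hw k)]
    exact sum_congr rfl fun j _ => by ring
  have hp : 0 < p := Nat.pos_of_ne_zero fun h => hw (by simp [h])
  simp_rw [hgeom, ← sum_div]
  rw [sum_comm]
  simp_rw [← mul_sum]
  rw [sum_congr rfl fun j hj => by rw [hζ.sum_pow_pow_eq_ite (mem_range.1 hj)]]
  simp [hp]

theorem sum_one_add_div_one_sub (hζ : IsPrimitiveRoot ζ p) (hw : w ^ p ≠ 1) :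
    ∑ k ∈ range p, (1 + w * ζ ^ k) / (1 - w * ζ ^ k) = p * (1 + w ^ p) / (1 - w ^ p) := by
  have hwp : 1 - w ^ p ≠ 0 := sub_ne_zero.2 hw.symm
  calc ∑ k ∈ range p, (1 + w * ζ ^ k) / (1 - w * ζ ^ k)
      = ∑ k ∈ range p, (2 * (1 - w * ζ ^ k)⁻¹ - 1) := by
        refine sum_congr rfl fun k _ => ?_
        field_simp [hζ.one_sub_mul_pow_ne_zero hw k]
        ring
    _ = p * (1 + w ^ p) / (1 - w ^ p) := by
        rw [sum_sub_distrib, ← mul_sum, hζ.sum_inv_one_sub_mul_pow hw, sum_const, card_range,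
          nsmul_eq_mul, mul_one]
        field_simp
        ring

end IsPrimitiveRoot

noncomputable def diskPoissonKernel (r θ : ℝ) : ℝ := (1 - r ^ 2) / (1 - 2 * r * cos θ + r ^ 2)

theorem one_sub_two_mul_cos_add_sq_pos {r : ℝ} (hr : |r| < 1) (θ : ℝ) :
    0 < 1 - 2 * r * cos θ + r ^ 2 := by
  have hrc : r * cos θ < 1 := (le_abs_self _).trans_lt <| by
    rw [abs_mul]; exact mul_lt_one_of_nonneg_of_lt_one_left (abs_nonneg r) hr (abs_cos_le_one θ)
  nlinarith [sin_sq_add_cos_sq θ, sq_nonneg (r * sin θ)]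

theorem normSq_one_sub_ofReal_mul_exp (r θ : ℝ) :
    Complex.normSq (1 - r * Complex.exp (θ * Complex.I)) = 1 - 2 * r * cos θ + r ^ 2 := by
  rw [Complex.normSq_apply]
  simp only [Complex.sub_re, Complex.sub_im, Complex.one_re, Complex.one_im,
    Complex.re_ofReal_mul, Complex.im_ofReal_mul, Complex.exp_ofReal_mul_I_re,
    Complex.exp_ofReal_mul_I_im]
  nlinarith [sin_sq_add_cos_sq θ]

theorem diskPoissonKernel_eq_re (r θ : ℝ) :
    diskPoissonKernel r θ =
      ((1 + r * Complex.exp (θ * Complex.I)) / (1 - r * Complex.exp (θ * Complex.I))).re := by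
  have := congrFun (poissonKernel_eq_re_herglotzRieszKernel (c := 0)
    (w := r * Complex.exp (θ * Complex.I))) 1
  simp only [poissonKernel, herglotzRieszKernel, sub_zero, norm_one, one_pow, Complex.norm_mul,
    Complex.norm_real, norm_eq_abs, Complex.norm_exp_ofReal_mul_I, mul_one, sq_abs,
    Function.comp_apply] at this
  rw [← this, diskPoissonKernel, ← normSq_one_sub_ofReal_mul_exp, Complex.normSq_eq_norm_sq]

theorem diskPoissonKernel_periodic (r : ℝ) : Function.Periodic (diskPoissonKernel r) (2 * π) :=
  fun θ => by simp only [diskPoissonKernel, cos_add_two_pi]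

theorem continuous_diskPoissonKernel {r : ℝ} (hr : |r| < 1) : Continuous (diskPoissonKernel r) :=
  continuous_const.div (by fun_prop) fun θ => (one_sub_two_mul_cos_add_sq_pos hr θ).ne'

theorem sqrt_mul_diskPoissonKernel (r θ : ℝ) :
    √(1 - 2 * r * cos θ + r ^ 2) * diskPoissonKernel r θ =
      (1 - r ^ 2) / √(1 - 2 * r * cos θ + r ^ 2) := by
  rw [diskPoissonKernel, mul_div_left_comm, sqrt_div_self', mul_one_div]

open Finset in
theorem sum_diskPoissonKernel_add {r : ℝ} (hr : |r| < 1) {p : ℕ} (hp : p ≠ 0) (t : ℝ) :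
    ∑ k ∈ range p, diskPoissonKernel r (t + 2 * π * k / p) =
      p * diskPoissonKernel (r ^ p) (p * t) := by
  set w : ℂ := r * Complex.exp (t * Complex.I)
  set ζ : ℂ := Complex.exp (2 * π * Complex.I / p)
  have hζ : IsPrimitiveRoot ζ p := Complex.isPrimitiveRoot_exp p hp
  have hw : w ^ p ≠ 1 := fun h => by
    have : |r| ^ p = 1 := by
      simpa [w, norm_pow, Complex.norm_exp_ofReal_mul_I] using congrArg norm h
    exact (pow_lt_one₀ (abs_nonneg r) hr hp).ne this
  have hwζ (k : ℕ) : w * ζ ^ k = r * Complex.exp ((t + 2 * π * k / p : ℝ) * Complex.I) := by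
    rw [← Complex.exp_nat_mul, mul_assoc, ← Complex.exp_add]
    push_cast
    ring_nf
  have hwp : w ^ p = (r ^ p : ℝ) * Complex.exp ((p * t : ℝ) * Complex.I) := by
    rw [mul_pow, ← Complex.exp_nat_mul]
    push_cast
    ring_nf
  have := congrArg Complex.re (hζ.sum_one_add_div_one_sub hw)
  rw [Complex.re_sum, mul_div_assoc, hwp, ← Complex.ofReal_natCast, Complex.re_ofReal_mul,
    ← diskPoissonKernel_eq_re] at this
  simpa only [hwζ, ← diskPoissonKernel_eq_re] using this

namespace Function.Periodic

variable {E : Type*} [NormedAddCommGroup E] [NormedSpace ℝ E] {f : ℝ → E} {T : ℝ}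

theorem intervalIntegral_comp_add_right (hf : Periodic f T) (c : ℝ) :
    ∫ x in 0..T, f (x + c) = ∫ x in 0..T, f x := by
  rw [intervalIntegral.integral_comp_add_right, zero_add, add_comm,
    hf.intervalIntegral_add_eq c 0, zero_add]

theorem intervalIntegral_comp_nat_mul (hf : Periodic f T)
    (hfi : ∀ a b, IntervalIntegrable f MeasureTheory.volume a b) {n : ℕ} (hn : n ≠ 0) :
    ∫ x in 0..T, f (n * x) = ∫ x in 0..T, f x := by
  have := hf.intervalIntegral_add_zsmul_eq n 0 hfi
  rw [zero_add, zero_add, natCast_zsmul, natCast_zsmul] at this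
  rw [integral_comp_mul_left _ (Nat.cast_ne_zero.2 hn), mul_zero, ← nsmul_eq_mul, this,
    ← Nat.cast_smul_eq_nsmul ℝ, smul_smul, inv_mul_cancel₀ (Nat.cast_ne_zero.2 hn), one_smul]

end Function.Periodic

open Finset in
theorem integral_comp_nat_mul_mul_diskPoissonKernel {g : ℝ → ℝ}
    (hg : Function.Periodic g (2 * π)) (hgc : Continuous g) {r : ℝ} (hr : |r| < 1) {p : ℕ}
    (hp : p ≠ 0) :
    ∫ t in 0..2 * π, g (p * t) * diskPoissonKernel r t =
      ∫ u in 0..2 * π, g u * diskPoissonKernel (r ^ p) u := by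
  set h : ℝ → ℝ := fun t => g (p * t) * diskPoissonKernel r t
  have hh : Function.Periodic h (2 * π) := fun t => by
    simp only [h, mul_add, (hg.nat_mul p) (p * t), diskPoissonKernel_periodic r t]
  have hhc : Continuous h := by
    have := continuous_diskPoissonKernel hr
    fun_prop
  have hshift (k : ℕ) (t : ℝ) :
      h (t + 2 * π * k / p) = g (p * t) * diskPoissonKernel r (t + 2 * π * k / p) := by
    have : (p : ℝ) * (t + 2 * π * k / p) = p * t + k * (2 * π) := by field_simp
    simp only [h]
    rw [this, hg.nat_mul k]
  have hG : Continuous fun u => g u * diskPoissonKernel (r ^ p) u := by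
    have := continuous_diskPoissonKernel (r := r ^ p) <| by
      rw [abs_pow]; exact pow_lt_one₀ (abs_nonneg r) hr hp
    fun_prop
  refine mul_left_cancel₀ (Nat.cast_ne_zero.2 hp : (p : ℝ) ≠ 0) ?_
  calc (p : ℝ) * ∫ t in 0..2 * π, h t
      = ∑ k ∈ range p, ∫ t in 0..2 * π, h (t + 2 * π * k / p) := by
        simp [hh.intervalIntegral_comp_add_right]
    _ = ∫ t in 0..2 * π, p * (g (p * t) * diskPoissonKernel (r ^ p) (p * t)) := by
        rw [← integral_finsetSum (f := fun (k : ℕ) t => h (t + 2 * π * k / p))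
          fun k _ => (hhc.comp (continuous_add_const _)).intervalIntegrable _ _]
        simp_rw [hshift, ← mul_sum, sum_diskPoissonKernel_add hr hp]
        congr 1; ext t; ring
    _ = p * ∫ u in 0..2 * π, g u * diskPoissonKernel (r ^ p) u := by
        rw [integral_const_mul,
          (hg.mul (diskPoissonKernel_periodic _)).intervalIntegral_comp_nat_mul
            (f := fun u => g u * diskPoissonKernel (r ^ p) u)
            (fun a b => hG.intervalIntegrable a b) hp]

theorem integral_zero_two_mul_eq_two_mul_of_symm {f : ℝ → ℝ} (hf : Continuous f) (a : ℝ)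
    (hsymm : ∀ x, f (2 * a - x) = f x) :
    ∫ x in 0..2 * a, f x = 2 * ∫ x in 0..a, f x := by
  have hright : ∫ x in a..2 * a, f x = ∫ x in 0..a, f x := by
    calc ∫ x in a..2 * a, f x = ∫ x in a..2 * a, f (2 * a - x) := by simp only [hsymm]
      _ = ∫ x in 0..a, f x := by
        rw [integral_comp_sub_left f, sub_self, show 2 * a - a = a by ring]
  rw [← integral_add_adjacent_intervals (hf.intervalIntegrable 0 a) (hf.intervalIntegrable a _),
    hright, two_mul]

section Landen

variable {ρ : ℝ}

theorem one_sub_sq_mul_sin_sq_pos (hρ : |ρ| < 1) (φ : ℝ) : 0 < 1 - ρ ^ 2 * sin φ ^ 2 := by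
  nlinarith [sin_sq_le_one φ, sq_nonneg ρ, (sq_lt_one_iff_abs_lt_one ρ).2 hρ]

theorem abs_mul_sin_lt_one (hρ : |ρ| < 1) (φ : ℝ) : |ρ * sin φ| < 1 := by
  rw [abs_mul]
  exact mul_lt_one_of_nonneg_of_lt_one_left (abs_nonneg ρ) hρ (abs_sin_le_one φ)

theorem hasDerivAt_sub_arcsin_mul_sin (hρ : |ρ| < 1) (φ : ℝ) :
    HasDerivAt (fun φ => φ - arcsin (ρ * sin φ))
      (1 - ρ * cos φ / √(1 - ρ ^ 2 * sin φ ^ 2)) φ := by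
  obtain ⟨hlo, hhi⟩ := abs_lt.1 (abs_mul_sin_lt_one hρ φ)
  refine ((hasDerivAt_id φ).sub
    ((hasDerivAt_arcsin hlo.ne' hhi.ne).comp φ ((hasDerivAt_sin φ).const_mul ρ))).congr_deriv ?_
  rw [mul_pow]
  field_simp

theorem sqrt_one_sub_two_mul_cos_sub_arcsin_add_sq (hρ : |ρ| < 1) (φ : ℝ) :
    √(1 - 2 * ρ * cos (φ - arcsin (ρ * sin φ)) + ρ ^ 2) =
      √(1 - ρ ^ 2 * sin φ ^ 2) - ρ * cos φ := by
  obtain ⟨hlo, hhi⟩ := abs_lt.1 (abs_mul_sin_lt_one hρ φ)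
  have hΔ := one_sub_sq_mul_sin_sq_pos hρ φ
  set Δ := √(1 - ρ ^ 2 * sin φ ^ 2)
  have hΔsq : Δ ^ 2 = 1 - ρ ^ 2 * sin φ ^ 2 := sq_sqrt hΔ.le
  have hρsq : ρ ^ 2 < 1 := (sq_lt_one_iff_abs_lt_one ρ).2 hρ
  -- `Δ ≥ 0` and `Δ² - (ρ cos φ)² = 1 - ρ² > 0`
  have hpos : 0 < Δ - ρ * cos φ := by
    nlinarith [sin_sq_add_cos_sq φ, sqrt_nonneg (1 - ρ ^ 2 * sin φ ^ 2),
      sq_nonneg (Δ + ρ * cos φ)]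
  rw [cos_sub, cos_arcsin, sin_arcsin hlo.le hhi.le, mul_pow, ← sqrt_sq hpos.le]
  congr 1
  nlinarith [sin_sq_add_cos_sq φ]

theorem integral_inv_sqrt_one_sub_two_mul_cos_add_sq (hρ : |ρ| < 1) :
    ∫ u in 0..2 * π, 1 / √(1 - 2 * ρ * cos u + ρ ^ 2) =
      4 * ∫ φ in 0..π / 2, 1 / √(1 - ρ ^ 2 * sin φ ^ 2) := by
  have hΔ (φ : ℝ) : √(1 - ρ ^ 2 * sin φ ^ 2) ≠ 0 :=
    (sqrt_pos.2 (one_sub_sq_mul_sin_sq_pos hρ φ)).ne'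
  have hK : Continuous fun φ => 1 / √(1 - ρ ^ 2 * sin φ ^ 2) :=
    continuous_const.div (by fun_prop) hΔ
  have hN : Continuous fun u => 1 / √(1 - 2 * ρ * cos u + ρ ^ 2) :=
    continuous_const.div (by fun_prop) fun u =>
      (sqrt_pos.2 (one_sub_two_mul_cos_add_sq_pos hρ u)).ne'
  have hsubst := integral_comp_mul_deriv (a := 0) (b := 2 * π)
    (fun φ _ => hasDerivAt_sub_arcsin_mul_sin hρ φ)
    (continuous_const.sub ((by fun_prop : Continuous fun φ => ρ * cos φ).div
      (by fun_prop) hΔ)).continuousOn hN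
  simp only [Function.comp_apply, sin_zero, sin_two_pi, mul_zero, arcsin_zero, sub_zero]
    at hsubst
  have hfold := integral_zero_two_mul_eq_two_mul_of_symm hK
  have hhalf := hfold (π / 2) fun φ => by rw [mul_div_cancel₀ π two_ne_zero, sin_pi_sub]
  rw [mul_div_cancel₀ π two_ne_zero] at hhalf
  calc ∫ u in 0..2 * π, 1 / √(1 - 2 * ρ * cos u + ρ ^ 2)
      = ∫ φ in 0..2 * π, 1 / √(1 - ρ ^ 2 * sin φ ^ 2) := by
        rw [← hsubst]
        refine integral_congr fun φ _ => ?_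
        have hN := (sqrt_pos.2 (one_sub_two_mul_cos_add_sq_pos hρ (φ - arcsin (ρ * sin φ)))).ne'
        rw [sqrt_one_sub_two_mul_cos_sub_arcsin_add_sq hρ] at hN
        simp only [sqrt_one_sub_two_mul_cos_sub_arcsin_add_sq hρ]
        field_simp [hΔ φ]
    _ = 4 * ∫ φ in 0..π / 2, 1 / √(1 - ρ ^ 2 * sin φ ^ 2) := by
        rw [hfold π fun φ => by rw [sin_two_pi_sub, neg_sq], hhalf]
        ring

end Landen

theorem kernel_integral_elliptic (q : ℝ) (hq0 : 0 < q) (hq1 : q < 1)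
    (p : ℕ) (hp : 1 ≤ p) :
    ∫ t in (0 : ℝ)..π,
        Real.sqrt (1 - 2 * q ^ p * Real.cos (p * t) + q ^ (2 * p)) /
          (1 - 2 * q * Real.cos t + q ^ 2) =
      2 * (1 - q ^ (2 * p)) / (1 - q ^ 2) *
        ∫ t in (0 : ℝ)..(π / 2), 1 / Real.sqrt (1 - (q ^ p) ^ 2 * Real.sin t ^ 2) := by
  have hq : |q| < 1 := abs_lt.2 ⟨by linarith, hq1⟩
  have hp0 : p ≠ 0 := by omega
  have hρ : |q ^ p| < 1 := by rw [abs_pow]; exact pow_lt_one₀ (abs_nonneg q) hq hp0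
  have hq2 : 1 - q ^ 2 ≠ 0 := by nlinarith
  rw [pow_mul']
  set ρ := q ^ p
  set g : ℝ → ℝ := fun u => √(1 - 2 * ρ * cos u + ρ ^ 2)
  have hg : Function.Periodic g (2 * π) := fun u => by simp only [g, cos_add_two_pi]
  have hgc : Continuous g := by fun_prop
  have hF : Continuous fun t => g (p * t) / (1 - 2 * q * cos t + q ^ 2) :=
    (hgc.comp (by fun_prop)).div (by fun_prop) fun t => (one_sub_two_mul_cos_add_sq_pos hq t).ne'
  calc ∫ t in 0..π, g (p * t) / (1 - 2 * q * cos t + q ^ 2)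
      = 2⁻¹ * ∫ t in 0..2 * π, g (p * t) / (1 - 2 * q * cos t + q ^ 2) := by
        rw [integral_zero_two_mul_eq_two_mul_of_symm hF π fun t => by
          simp only [g, mul_sub, cos_nat_mul_two_pi_sub, cos_two_pi_sub]]
        ring
    _ = 2⁻¹ * (1 - q ^ 2)⁻¹ * ∫ t in 0..2 * π, g (p * t) * diskPoissonKernel q t := by
        rw [mul_assoc, ← integral_const_mul (1 - q ^ 2)⁻¹]
        refine congrArg _ (integral_congr fun t _ => ?_)
        simp only [diskPoissonKernel]
        field_simp
    _ = 2⁻¹ * (1 - q ^ 2)⁻¹ * ∫ u in 0..2 * π, g u * diskPoissonKernel ρ u := by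
        rw [integral_comp_nat_mul_mul_diskPoissonKernel hg hgc hq hp0]
    _ = 2 * (1 - ρ ^ 2) / (1 - q ^ 2) * ∫ t in 0..π / 2, 1 / √(1 - ρ ^ 2 * sin t ^ 2) := by
        simp only [g, sqrt_mul_diskPoissonKernel, div_eq_mul_one_div (1 - ρ ^ 2)]
        rw [integral_const_mul, integral_inv_sqrt_one_sub_two_mul_cos_add_sq hρ]
        field_simp
        ring
end

section
/- Let q \in (0,1), m \in \mathbb{N} with m \ge 2, and define \psi_m(k) = q^k (1 + \sum_{j=1}^{m-1} ((1-q^2)^j/(j! 2^j)) \prod_{l=0}^{j-1} (k+2l)) for k \ge 1 (the coefficients of the polyharmonic Poisson kernel). Then for every N \ge 1, \sup_{k \ge N} |\psi_m(k+1)/\psi_m(k) - q| \le (2m-3) q / N. -/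
/-! Write `ψ k = q ^ k (1 + S k)` where `S x` is the finite sum with the products `∏ (x + 2l)`.
Then `ψ (k+1) / ψ k = q (1 + S (k+1)) / (1 + S k)`. Every product grows when `x` is replaced by
`x + 1`, so the ratio is at least `q`; and `x ∏ (x + 1 + 2l) ≤ (x + j) ∏ (x + 2l)` for a product of
`j ≤ m - 1` factors, so `k S (k+1) ≤ (k + m - 1) S k` and the ratio exceeds `q` by at most
`q (m - 1) / k ≤ (2m - 3) q / N`. -/

open Finset

lemma prod_range_add_two_mul_nonneg {x : ℝ} (hx : 0 ≤ x) (j : ℕ) :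
    0 ≤ ∏ l ∈ range j, (x + 2 * l) :=
  prod_nonneg fun _ _ => by positivity

lemma mul_prod_range_add_one_add_two_mul_le {x : ℝ} (hx : 0 ≤ x) (j : ℕ) :
    x * ∏ l ∈ range j, (x + 1 + 2 * l) ≤ (x + j) * ∏ l ∈ range j, (x + 2 * l) := by
  induction j with
  | zero => simp
  | succ j ih =>
    have hP := prod_range_add_two_mul_nonneg hx j
    -- `(x + j) (x + 1 + 2j) ≤ (x + j + 1) (x + 2j)` reduces to `x + j ≤ x + 2j`
    have step : (x + j) * (x + 1 + 2 * j) ≤ (x + (j + 1)) * (x + 2 * j) := by nlinarith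
    rw [prod_range_succ, prod_range_succ, ← mul_assoc]
    push_cast
    calc x * (∏ l ∈ range j, (x + 1 + 2 * l)) * (x + 1 + 2 * j)
        ≤ (x + j) * (∏ l ∈ range j, (x + 2 * l)) * (x + 1 + 2 * j) := by gcongr
      _ = (∏ l ∈ range j, (x + 2 * l)) * ((x + j) * (x + 1 + 2 * j)) := by ring
      _ ≤ (∏ l ∈ range j, (x + 2 * l)) * ((x + (j + 1)) * (x + 2 * j)) := by gcongr
      _ = (x + (j + 1)) * ((∏ l ∈ range j, (x + 2 * l)) * (x + 2 * j)) := by ring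

lemma abs_mul_one_add_div_one_add_sub_le {q A B x c : ℝ} (hq : 0 ≤ q) (hA : 0 ≤ A)
    (hx : 0 < x) (hc : 0 ≤ c) (hAB : A ≤ B) (hBA : x * B ≤ (x + c) * A) :
    |q * ((1 + B) / (1 + A)) - q| ≤ q * c / x := by
  have hA1 : 0 < 1 + A := by linarith
  have hdiff : q * ((1 + B) / (1 + A)) - q = q * ((B - A) / (1 + A)) := by field_simp; ring
  have hfrac : (B - A) / (1 + A) ≤ c / x := by
    rw [div_le_div_iff₀ hA1 hx]
    nlinarith
  rw [hdiff, abs_of_nonneg (by have := sub_nonneg.2 hAB; positivity), mul_div_assoc]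
  exact mul_le_mul_of_nonneg_left hfrac hq

section PolyharmonicSum

variable (q : ℝ) (m : ℕ)

noncomputable def polyharmonicSum (x : ℝ) : ℝ :=
  ∑ j ∈ Icc 1 (m - 1), (1 - q ^ 2) ^ j / (j.factorial * 2 ^ j) * ∏ l ∈ range j, (x + 2 * l)

variable {q}

lemma polyharmonicSum_nonneg (hq : q ^ 2 ≤ 1) {x : ℝ} (hx : 0 ≤ x) :
    0 ≤ polyharmonicSum q m x :=
  sum_nonneg fun j _ => mul_nonneg (by have := sub_nonneg.2 hq; positivity)
    (prod_range_add_two_mul_nonneg hx j)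

lemma polyharmonicSum_le_add_one (hq : q ^ 2 ≤ 1) {x : ℝ} (hx : 0 ≤ x) :
    polyharmonicSum q m x ≤ polyharmonicSum q m (x + 1) := by
  have := sub_nonneg.2 hq
  unfold polyharmonicSum
  gcongr
  linarith

lemma mul_polyharmonicSum_add_one_le (hq : q ^ 2 ≤ 1) {x : ℝ} (hx : 0 ≤ x) :
    x * polyharmonicSum q m (x + 1) ≤ (x + (m - 1 : ℕ)) * polyharmonicSum q m x := by
  have := sub_nonneg.2 hq
  unfold polyharmonicSum
  rw [mul_sum, mul_sum]
  refine sum_le_sum fun j hj => ?_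
  have hjm : (j : ℝ) ≤ (m - 1 : ℕ) := by exact_mod_cast (mem_Icc.1 hj).2
  calc x * ((1 - q ^ 2) ^ j / (j.factorial * 2 ^ j) * ∏ l ∈ range j, (x + 1 + 2 * l))
      = (1 - q ^ 2) ^ j / (j.factorial * 2 ^ j) * (x * ∏ l ∈ range j, (x + 1 + 2 * l)) := by ring
    _ ≤ (1 - q ^ 2) ^ j / (j.factorial * 2 ^ j) * ((x + j) * ∏ l ∈ range j, (x + 2 * l)) :=
        mul_le_mul_of_nonneg_left (mul_prod_range_add_one_add_two_mul_le hx j) (by positivity)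
    _ ≤ (1 - q ^ 2) ^ j / (j.factorial * 2 ^ j) * ((x + (m - 1 : ℕ)) * ∏ l ∈ range j, (x + 2 * l)) := by
        gcongr
    _ = (x + (m - 1 : ℕ)) * ((1 - q ^ 2) ^ j / (j.factorial * 2 ^ j) * ∏ l ∈ range j, (x + 2 * l)) := by
        ring

end PolyharmonicSum

theorem polyharmonic_eps (q : ℝ) (hq0 : 0 < q) (hq1 : q < 1)
    (m : ℕ) (hm : 2 ≤ m) (ψ : ℕ → ℝ)
    (hψ : ∀ k, 1 ≤ k → ψ k = q ^ k *
      (1 + ∑ j ∈ Finset.Icc 1 (m - 1),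
        (1 - q ^ 2) ^ j / (j.factorial * 2 ^ j) *
          ∏ l ∈ Finset.range j, ((k : ℝ) + 2 * l))) :
    ∀ N : ℕ, 1 ≤ N → ∀ k, N ≤ k →
      |ψ (k + 1) / ψ k - q| ≤ (2 * (m : ℝ) - 3) * q / N := by
  intro N hN k hNk
  have hq : q ^ 2 ≤ 1 := by nlinarith
  have hψS : ∀ k : ℕ, 1 ≤ k → ψ k = q ^ k * (1 + polyharmonicSum q m k) := hψ
  have hk : (0 : ℝ) ≤ k := k.cast_nonneg
  have hN0 : (0 : ℝ) < N := by exact_mod_cast hN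
  have hNk' : (N : ℝ) ≤ k := by exact_mod_cast hNk
  have hratio : ψ (k + 1) / ψ k =
      q * ((1 + polyharmonicSum q m (k + 1)) / (1 + polyharmonicSum q m k)) := by
    rw [hψS (k + 1) (by omega), hψS k (by omega), pow_succ, Nat.cast_succ]
    field_simp
  have hbound := abs_mul_one_add_div_one_add_sub_le hq0.le (polyharmonicSum_nonneg m hq hk)
    (hN0.trans_le hNk') (Nat.cast_nonneg _)
    (polyharmonicSum_le_add_one m hq hk) (mul_polyharmonicSum_add_one_le m hq hk)
  rw [Nat.cast_sub (by omega), Nat.cast_one] at hbound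
  rw [hratio]
  have hm' : (2 : ℝ) ≤ m := by exact_mod_cast hm
  calc _ ≤ q * (m - 1) / k := hbound
    _ ≤ q * (m - 1) / N := div_le_div_of_nonneg_left (by nlinarith) hN0 hNk'
    _ ≤ q * (2 * m - 3) / N := by gcongr q * ?_ / _; linarith
    _ = (2 * m - 3) * q / N := by ring
end

section
/- Let q \in (0,1), n, p \in \mathbb{N} with 1 \le p \le n, \beta \in \mathbb{R}, let \psi : \mathbb{N} \to (0,\infty) satisfy \varepsilon := \sup_{k \ge n-p+1} |\psi(k+1)/\psi(k) - q| < (1-q)/2, and let \tau_{n,p}(k) = 1 - (n-k)/p for n-p+1 \le k \le n-1, \tau_{n,p}(k) = 1 for k \ge n. Then for every t \in \mathbb{R}, |\sum_{k=n-p+2}^{\infty} \tau_{n,p}(k) (\psi(k)/\psi(n-p+1) - q^{k-(n-p+1)}) \cos(kt - \beta\pi/2)| \le 2\varepsilon/(1-q)^2. -/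
lemma prod_bound_aux (q ε : ℝ) (hq0 : 0 ≤ q) (hε0 : 0 ≤ ε) (m : ℕ)
    (ψ : ℕ → ℝ) (hψ : ∀ k, 0 < ψ k)
    (hr : ∀ k, m ≤ k → |ψ (k + 1) / ψ k - q| ≤ ε) :
    ∀ j : ℕ, |ψ (m + 1 + j) / ψ m - q ^ (j + 1)| ≤ (q + ε) ^ (j + 1) - q ^ (j + 1) := by
  intro j
  induction j with
  | zero =>
      simpa using hr m le_rfl
  | succ j ih =>
      have hpos := hψ (m + 1 + j)
      have hpos0 := hψ m
      set r : ℝ := ψ (m + 1 + j + 1) / ψ (m + 1 + j) with hrdef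
      set P : ℝ := ψ (m + 1 + j) / ψ m with hPdef
      have hre : |r - q| ≤ ε := hr (m + 1 + j) (by omega)
      have hr0 : 0 < r := div_pos (hψ _) hpos
      have hrub : r ≤ q + ε := by
        have := abs_le.mp hre
        linarith [this.2]
      have hkey : ψ (m + 1 + (j + 1)) / ψ m = r * P := by
        have : m + 1 + (j + 1) = (m + 1 + j) + 1 := by omega
        rw [this, hrdef, hPdef]
        field_simp
      rw [hkey]
      have h1 : r * P - q ^ (j + 1 + 1) = r * (P - q ^ (j + 1)) + q ^ (j + 1) * (r - q) := by
        ring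
      rw [h1]
      have h2 : |r * (P - q ^ (j + 1)) + q ^ (j + 1) * (r - q)| ≤
          r * |P - q ^ (j + 1)| + q ^ (j + 1) * |r - q| := by
        calc |r * (P - q ^ (j + 1)) + q ^ (j + 1) * (r - q)| ≤
            |r * (P - q ^ (j + 1))| + |q ^ (j + 1) * (r - q)| := abs_add_le _ _
          _ = r * |P - q ^ (j + 1)| + q ^ (j + 1) * |r - q| := by
              rw [abs_mul, abs_mul, abs_of_pos hr0, abs_of_nonneg (pow_nonneg hq0 _)]
      have hqp : (0:ℝ) ≤ q ^ (j + 1) := pow_nonneg hq0 _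
      have h3 : r * |P - q ^ (j + 1)| + q ^ (j + 1) * |r - q| ≤
          (q + ε) * ((q + ε) ^ (j + 1) - q ^ (j + 1)) + q ^ (j + 1) * ε := by
        have hP0 : 0 ≤ |P - q ^ (j + 1)| := abs_nonneg _
        have := mul_le_mul hrub ih hP0 (by linarith)
        nlinarith [mul_le_mul_of_nonneg_left hre hqp]
      have h4 : (q + ε) * ((q + ε) ^ (j + 1) - q ^ (j + 1)) + q ^ (j + 1) * ε =
          (q + ε) ^ (j + 1 + 1) - q ^ (j + 1 + 1) := by ring
      linarith

set_option maxHeartbeats 1000000 in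
theorem remainder_bound_uniform (q : ℝ) (hq0 : 0 < q) (hq1 : q < 1)
    (n p : ℕ) (hp : 1 ≤ p) (hpn : p ≤ n) (β : ℝ)
    (ψ : ℕ → ℝ) (hψ : ∀ k, 0 < ψ k) (ε : ℝ)
    (hsup : IsLUB {x : ℝ | ∃ k, n - p + 1 ≤ k ∧ x = |ψ (k + 1) / ψ k - q|} ε)
    (hε : ε < (1 - q) / 2) (τ : ℕ → ℝ)
    (hτ1 : ∀ k, n - p + 1 ≤ k → k ≤ n - 1 → τ k = 1 - ((n : ℝ) - k) / p)
    (hτ2 : ∀ k, n ≤ k → τ k = 1) :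
    ∀ t : ℝ,
      |∑' j : ℕ, τ (n - p + 2 + j) *
          (ψ (n - p + 2 + j) / ψ (n - p + 1) - q ^ (j + 1)) *
          Real.cos ((n - p + 2 + j : ℕ) * t - β * Real.pi / 2)| ≤
        2 * ε / (1 - q) ^ 2 := by
  intro t
  set m : ℕ := n - p + 1 with hm
  -- basic facts
  have hr : ∀ k, m ≤ k → |ψ (k + 1) / ψ k - q| ≤ ε := by
    intro k hk
    exact hsup.1 ⟨k, hk, rfl⟩
  have hε0 : 0 ≤ ε := le_trans (abs_nonneg _) (hr m le_rfl)
  have hqε1 : q + ε < 1 := by linarith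
  have hqε0 : 0 ≤ q + ε := by linarith
  have hprod := prod_bound_aux q ε hq0.le hε0 m ψ hψ hr
  -- τ bounds
  have hτbd : ∀ j : ℕ, |τ (n - p + 2 + j)| ≤ 1 := by
    intro j
    set k := n - p + 2 + j with hk
    by_cases hkn : n ≤ k
    · rw [hτ2 k hkn]; norm_num
    · push_neg at hkn
      have hk1 : m ≤ k := by omega
      have hk2 : k ≤ n - 1 := by omega
      rw [hτ1 k hk1 hk2]
      have hc1 : (k : ℝ) ≤ (n : ℝ) := by exact_mod_cast hkn.le
      have hc2 : (n : ℝ) - k ≤ p := by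
        have : n ≤ k + p := by omega
        have := (Nat.cast_le (α := ℝ)).mpr this
        push_cast at this
        linarith
      have hp0 : (0:ℝ) < p := by exact_mod_cast hp
      rw [abs_le]
      constructor
      · have : ((n:ℝ) - k) / p ≤ 1 := by
          rw [div_le_one hp0]; exact hc2
        linarith
      · have : 0 ≤ ((n:ℝ) - k) / p := div_nonneg (by linarith) hp0.le
        linarith
  -- the index identity
  have hidx : ∀ j : ℕ, n - p + 2 + j = m + 1 + j := by intro j; omega
  -- per-term bound
  set a : ℕ → ℝ := fun j => τ (n - p + 2 + j) *
      (ψ (n - p + 2 + j) / ψ (n - p + 1) - q ^ (j + 1)) *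
      Real.cos ((n - p + 2 + j : ℕ) * t - β * Real.pi / 2) with ha
  set g : ℕ → ℝ := fun j => (q + ε) ^ (j + 1) - q ^ (j + 1) with hg
  have habd : ∀ j, |a j| ≤ g j := by
    intro j
    have h1 : |ψ (n - p + 2 + j) / ψ (n - p + 1) - q ^ (j + 1)| ≤ g j := by
      rw [hidx j]; exact hprod j
    calc |a j| = |τ (n - p + 2 + j)| * |ψ (n - p + 2 + j) / ψ (n - p + 1) - q ^ (j + 1)| *
          |Real.cos ((n - p + 2 + j : ℕ) * t - β * Real.pi / 2)| := by
          rw [ha]; simp [abs_mul]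
      _ ≤ 1 * g j * 1 := by
          have hg0 : 0 ≤ g j := sub_nonneg.mpr
            (pow_le_pow_left₀ hq0.le (by linarith : q ≤ q + ε) _)
          exact mul_le_mul (mul_le_mul (hτbd j) h1 (abs_nonneg _) zero_le_one)
            (Real.abs_cos_le_one _) (abs_nonneg _) (by simpa using hg0)
      _ = g j := by ring
  -- summability
  have hs1 : Summable (fun j : ℕ => (q + ε) ^ (j + 1)) := by
    simpa [pow_succ, mul_comm] using
      (summable_geometric_of_lt_one hqε0 hqε1).mul_left (q + ε)
  have hs2 : Summable (fun j : ℕ => q ^ (j + 1)) := by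
    simpa [pow_succ, mul_comm] using
      (summable_geometric_of_lt_one hq0.le hq1).mul_left q
  have hsg : Summable g := hs1.sub hs2
  have hsa : Summable a := by
    apply Summable.of_abs
    exact Summable.of_nonneg_of_le (fun j => abs_nonneg _) habd hsg
  -- bound the tsum
  have h1 : |∑' j, a j| ≤ ∑' j, |a j| := by
    have := norm_tsum_le_tsum_norm (f := a)
      (by simpa [Real.norm_eq_abs] using hsa.abs)
    simpa [Real.norm_eq_abs] using this
  have h2 : ∑' j, |a j| ≤ ∑' j, g j := Summable.tsum_le_tsum habd hsa.abs hsg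
  have h3 : ∑' j, g j = (q + ε) / (1 - (q + ε)) - q / (1 - q) := by
    rw [hg, Summable.tsum_sub hs1 hs2]
    have e1 : ∑' j : ℕ, (q + ε) ^ (j + 1) = (q + ε) * (1 - (q + ε))⁻¹ := by
      simp only [pow_succ, mul_comm ((q+ε)^_) (q+ε)]
      rw [tsum_mul_left, tsum_geometric_of_lt_one hqε0 hqε1]
    have e2 : ∑' j : ℕ, q ^ (j + 1) = q * (1 - q)⁻¹ := by
      simp only [pow_succ, mul_comm (q^_) q]
      rw [tsum_mul_left, tsum_geometric_of_lt_one hq0.le hq1]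
    rw [e1, e2, div_eq_mul_inv, div_eq_mul_inv]
  have h4 : (q + ε) / (1 - (q + ε)) - q / (1 - q) ≤ 2 * ε / (1 - q) ^ 2 := by
    have d1 : (0:ℝ) < 1 - (q + ε) := by linarith
    have d2 : (0:ℝ) < 1 - q := by linarith
    rw [div_sub_div _ _ (ne_of_gt d1) (ne_of_gt d2), div_le_div_iff₀ (by positivity) (by positivity)]
    nlinarith [mul_nonneg (mul_nonneg hε0 (by linarith : (0:ℝ) ≤ 1 - q - 2 * ε)) d2.le]
  calc |∑' j, a j| ≤ ∑' j, |a j| := h1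
    _ ≤ ∑' j, g j := h2
    _ ≤ 2 * ε / (1 - q) ^ 2 := by rw [h3]; exact h4
end

section
/- Let q \in (0,1), n, p \in \mathbb{N} with 1 \le p \le n, \beta \in \mathbb{R}, let \psi : \mathbb{N} \to (0,\infty) satisfy \varepsilon := \sup_{k \ge n-p+1} |\psi(k+1)/\psi(k) - q| < (1-q)/2, and let \tau_{n,p}(k) = 1 - (n-k)/p for n-p+1 \le k \le n-1, \tau_{n,p}(k) = 1 for k \ge n. Then for every t \in \mathbb{R}, |\sum_{k=n-p+2}^{\infty} \tau_{n,p}(k) (\psi(k)/\psi(n-p+1) - q^{k-(n-p+1)}) \cos(kt - \beta\pi/2)| \le 8\varepsilon/(p(1-q)^3). -/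
/-! With `m = n - p + 1`, the ratio hypothesis gives by induction
`|ψ (m + j) / ψ m - q ^ j| ≤ (q + ε) ^ j - q ^ j`, and the taper satisfies `|τ (m + k)| ≤ (k + 1) / p`.
Comparing with `∑ (k + 1) x ^ k = 1 / (1 - x) ^ 2` at `x = q + ε` and `x = q` bounds the remainder by
`(1 / (1 - q - ε) ^ 2 - 1 / (1 - q) ^ 2) / p`, which is at most `8 ε / (p (1 - q) ^ 3)`
because `ε ≤ (1 - q) / 2`. -/

theorem hasSum_succ_mul_pow_sub_pow {𝕜 : Type*} [NormedField 𝕜] {x y : 𝕜}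
    (hx : ‖x‖ < 1) (hy : ‖y‖ < 1) :
    HasSum (fun j : ℕ => ((j : 𝕜) + 2) * (x ^ (j + 1) - y ^ (j + 1)))
      (1 / (1 - x) ^ 2 - 1 / (1 - y) ^ 2) := by
  have hsum := (hasSum_choose_mul_geometric_of_norm_lt_one 1 hx).sub
    (hasSum_choose_mul_geometric_of_norm_lt_one 1 hy)
  rw [← hasSum_nat_add_iff' 1] at hsum
  convert! hsum using 1
  · ext j
    push_cast [Nat.choose_one_right]
    ring
  · simp [Nat.choose_one_right]

theorem abs_div_sub_pow_le {ψ : ℕ → ℝ} (hψ : ∀ k, ψ k ≠ 0) {q ε : ℝ} (hq : 0 ≤ q) {m : ℕ}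
    (hratio : ∀ k, m ≤ k → |ψ (k + 1) / ψ k - q| ≤ ε) (j : ℕ) :
    |ψ (m + j) / ψ m - q ^ j| ≤ (q + ε) ^ j - q ^ j := by
  induction j with
  | zero => simp [hψ m]
  | succ j ih =>
    set ρ := ψ (m + j + 1) / ψ (m + j)
    have hρ : |ρ - q| ≤ ε := hratio _ (Nat.le_add_right m j)
    have hρ_abs : |ρ| ≤ q + ε := by
      have := abs_sub_abs_le_abs_sub ρ q
      rw [abs_of_nonneg hq] at this
      linarith
    have hsplit : ψ (m + (j + 1)) / ψ m - q ^ (j + 1)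
        = (ψ (m + j) / ψ m - q ^ j) * ρ + q ^ j * (ρ - q) := by
      rw [← add_assoc]
      simp only [ρ]
      field_simp [hψ (m + j), hψ m]
      ring
    calc |ψ (m + (j + 1)) / ψ m - q ^ (j + 1)|
        ≤ |ψ (m + j) / ψ m - q ^ j| * |ρ| + q ^ j * |ρ - q| := by
          rw [hsplit]
          refine (abs_add_le _ _).trans_eq ?_
          rw [abs_mul, abs_mul, abs_of_nonneg (pow_nonneg hq j)]
      _ ≤ ((q + ε) ^ j - q ^ j) * (q + ε) + q ^ j * ε := by
          gcongr
          exact (abs_nonneg _).trans ih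
      _ = (q + ε) ^ (j + 1) - q ^ (j + 1) := by ring

theorem abs_taper_le {n p : ℕ} (hp : 1 ≤ p) (hpn : p ≤ n) {τ : ℕ → ℝ}
    (hτ1 : ∀ k, n - p + 1 ≤ k → k ≤ n - 1 → τ k = 1 - ((n : ℝ) - k) / p)
    (hτ2 : ∀ k, n ≤ k → τ k = 1) (k : ℕ) :
    |τ (n - p + 1 + k)| ≤ (k + 1) / p := by
  have hp0 : (0 : ℝ) < p := by exact_mod_cast hp
  rcases le_or_gt (n - p + 1 + k) (n - 1) with hle | hgt
  · have hcast : ((n - p + 1 + k : ℕ) : ℝ) = n - p + 1 + k := by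
      push_cast [Nat.cast_sub hpn]; ring
    have hval : τ (n - p + 1 + k) = (k + 1) / p := by
      rw [hτ1 _ (Nat.le_add_right _ _) hle, hcast]
      field_simp
      ring
    rw [hval, abs_of_nonneg (by positivity)]
  · rw [hτ2 _ (by omega), abs_one, one_le_div₀ hp0]
    exact_mod_cast (show p ≤ k + 1 by omega)

theorem inv_sq_sub_inv_sq_le {a ε : ℝ} (ha : 0 < a) (hε : 0 ≤ ε) (hεa : 2 * ε ≤ a) :
    1 / (a - ε) ^ 2 - 1 / a ^ 2 ≤ 8 * ε / a ^ 3 := by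
  have hae : a / 2 ≤ a - ε := by linarith
  have hae0 : 0 < a - ε := by linarith
  calc 1 / (a - ε) ^ 2 - 1 / a ^ 2 = ε * (2 * a - ε) / (a ^ 2 * (a - ε) ^ 2) := by
        field_simp
        ring
    _ ≤ ε * (2 * a) / (a ^ 2 * (a / 2) ^ 2) := by
        gcongr
        linarith
    _ = 8 * ε / a ^ 3 := by
        field_simp
        ring

theorem remainder_bound_with_p (q : ℝ) (hq0 : 0 < q) (hq1 : q < 1)
    (n p : ℕ) (hp : 1 ≤ p) (hpn : p ≤ n) (β : ℝ)
    (ψ : ℕ → ℝ) (hψ : ∀ k, 0 < ψ k) (ε : ℝ)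
    (hsup : IsLUB {x : ℝ | ∃ k, n - p + 1 ≤ k ∧ x = |ψ (k + 1) / ψ k - q|} ε)
    (hε : ε < (1 - q) / 2) (τ : ℕ → ℝ)
    (hτ1 : ∀ k, n - p + 1 ≤ k → k ≤ n - 1 → τ k = 1 - ((n : ℝ) - k) / p)
    (hτ2 : ∀ k, n ≤ k → τ k = 1) :
    ∀ t : ℝ,
      |∑' j : ℕ, τ (n - p + 2 + j) *
          (ψ (n - p + 2 + j) / ψ (n - p + 1) - q ^ (j + 1)) *
          Real.cos ((n - p + 2 + j : ℕ) * t - β * Real.pi / 2)| ≤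
        8 * ε / (p * (1 - q) ^ 3) := by
  intro t
  have hratio : ∀ k, n - p + 1 ≤ k → |ψ (k + 1) / ψ k - q| ≤ ε :=
    fun k hk => hsup.1 ⟨k, hk, rfl⟩
  have hε0 : 0 ≤ ε := (abs_nonneg _).trans (hratio _ le_rfl)
  have hterm : ∀ j : ℕ, ‖τ (n - p + 2 + j) *
      (ψ (n - p + 2 + j) / ψ (n - p + 1) - q ^ (j + 1)) *
      Real.cos ((n - p + 2 + j : ℕ) * t - β * Real.pi / 2)‖ ≤
        ((j : ℝ) + 2) * ((q + ε) ^ (j + 1) - q ^ (j + 1)) / p := by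
    intro j
    have hidx : n - p + 2 + j = n - p + 1 + (j + 1) := by omega
    have hτj := abs_taper_le hp hpn hτ1 hτ2 (j + 1)
    have hψj := abs_div_sub_pow_le (fun k => (hψ k).ne') hq0.le hratio (j + 1)
    rw [Real.norm_eq_abs, abs_mul, abs_mul, hidx]
    calc |τ (n - p + 1 + (j + 1))| * |ψ (n - p + 1 + (j + 1)) / ψ (n - p + 1) - q ^ (j + 1)|
          * |Real.cos _|
        ≤ (((j + 1 : ℕ) : ℝ) + 1) / p * ((q + ε) ^ (j + 1) - q ^ (j + 1)) * 1 := by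
          have hgap := (abs_nonneg _).trans hψj
          exact mul_le_mul (mul_le_mul hτj hψj (abs_nonneg _) (by positivity))
            (Real.abs_cos_le_one _) (abs_nonneg _) (by positivity)
      _ = ((j : ℝ) + 2) * ((q + ε) ^ (j + 1) - q ^ (j + 1)) / p := by
          push_cast; ring
  have hsum := (hasSum_succ_mul_pow_sub_pow (x := q + ε) (y := q)
    (by rw [Real.norm_of_nonneg (by positivity)]; linarith)
    (by rw [Real.norm_of_nonneg hq0.le]; exact hq1)).div_const (p : ℝ)
  calc _ ≤ (1 / (1 - (q + ε)) ^ 2 - 1 / (1 - q) ^ 2) / p := tsum_of_norm_bounded hsum hterm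
    _ = (1 / (1 - q - ε) ^ 2 - 1 / (1 - q) ^ 2) / p := by rw [sub_add_eq_sub_sub]
    _ ≤ 8 * ε / (1 - q) ^ 3 / p := by
        gcongr
        exact inv_sq_sub_inv_sq_le (by linarith) hε0 (by linarith)
    _ = 8 * ε / (p * (1 - q) ^ 3) := by rw [div_div, mul_comm ((1 - q) ^ 3)]
end
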